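/- Let V be a topologically free ℂ[[ℏ]]-module and U a ℂ[[ℏ]]-submodule with [U] = U, where [U] = {v ∈ V : ℏⁿv ∈ U for some n ∈ ℕ}. Then the closure Ū of U in the ℏ-adic topology satisfies [Ū] = Ū, and Ū is topologically free. -/
import Mathlib


noncomputable section

open PowerSeries Pointwise

/-- `ℂ[[ℏ]]`. -/
abbrev Ch := PowerSeries ℂ

/-- The maximal ideal `(ℏ)` of `ℂ[[ℏ]]`. -/
def hIdeal : Ideal Ch := Ideal.span {PowerSeries.X}

/-- Torsion-freeness over `ℂ[[ℏ]]`: `ℏⁿ v = 0` implies `v = 0`. -/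
def TorsionFreeH (M : Type*) [AddCommGroup M] [Module Ch M] : Prop :=
  ∀ (n : ℕ) (v : M), (PowerSeries.X : Ch) ^ n • v = 0 → v = 0

/-- Saturation condition `[U] = U`, where `[U] = {v : ℏⁿ v ∈ U for some n}`. -/
def Saturated {V : Type*} [AddCommGroup V] [Module Ch V] (U : Set V) : Prop :=
  ∀ (v : V) (n : ℕ), (PowerSeries.X : Ch) ^ n • v ∈ U → v ∈ U

/-- The `ℏ`-adic closure of `U` in `V`, as a set. -/
def hClosure {V : Type*} [AddCommGroup V] [Module Ch V] (U : Submodule Ch V) : Set V :=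
  {v : V | ∀ n : ℕ, ∃ u ∈ U, v - u ∈ (hIdeal ^ n) • (⊤ : Submodule Ch V)}

/-- Membership in `hIdeal ^ n • ⊤` means divisibility by `Xⁿ`. -/
lemma memH {M : Type*} [AddCommGroup M] [Module Ch M] (n : ℕ) (x : M) :
    x ∈ (hIdeal ^ n • ⊤ : Submodule Ch M) ↔ ∃ t : M, x = (PowerSeries.X : Ch) ^ n • t := by
  rw [hIdeal, Ideal.span_singleton_pow, Submodule.ideal_span_singleton_smul]
  constructor
  · intro hx
    have hx' : x ∈ ((PowerSeries.X : Ch) ^ n • (⊤ : Submodule Ch M) : Set M) := hx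
    obtain ⟨t, -, ht⟩ := hx'
    exact ⟨t, ht.symm⟩
  · rintro ⟨t, rfl⟩
    exact Submodule.smul_mem_pointwise_smul t _ ⊤ trivial

/-- let `V` be a topologically free `ℂ[[ℏ]]`-module and `U` a submodule with
`[U] = U`.  Then the `ℏ`-adic closure `Ū` of `U` satisfies `[Ū] = Ū`, and `Ū` is topologically
free (torsion-free, separated, `ℏ`-adically complete).  The closure is quantified as any
submodule whose underlying set is the closure set of `U`. -/
theorem stmt6 (V : Type*) [AddCommGroup V] [Module Ch V]
    [IsAdicComplete hIdeal V] (htf : TorsionFreeH V)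
    (U : Submodule Ch V) (hU : Saturated (U : Set V)) :
    Saturated (hClosure U) ∧
    ∀ Ubar : Submodule Ch V, (Ubar : Set V) = hClosure U →
      TorsionFreeH Ubar ∧ IsAdicComplete hIdeal Ubar := by
  -- Saturation of the closure
  have hsat : Saturated (hClosure U) := by
    intro v n hv m
    obtain ⟨u, hu, hmem⟩ := hv (n + m)
    obtain ⟨w, hw⟩ := (memH _ _).mp hmem
    have key : (PowerSeries.X : Ch) ^ n • (v - (PowerSeries.X : Ch) ^ m • w) = u := by
      rw [smul_sub, smul_smul, ← pow_add]
      rw [sub_eq_iff_eq_add'] at hw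
      rw [hw]; abel
    have hu' : v - (PowerSeries.X : Ch) ^ m • w ∈ U := hU _ n (by rw [key]; exact hu)
    refine ⟨v - (PowerSeries.X : Ch) ^ m • w, hu', ?_⟩
    rw [sub_sub_cancel]
    exact (memH m _).mpr ⟨w, rfl⟩
  refine ⟨hsat, fun Ubar hUbar => ?_⟩
  have hmemUbar : ∀ x : V, x ∈ Ubar ↔ x ∈ hClosure U := fun x => by
    rw [← hUbar]; rfl
  constructor
  · -- torsion-free
    intro n v hv
    have h0 : (PowerSeries.X : Ch) ^ n • (v : V) = 0 := by
      have := congrArg (Subtype.val) hv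
      simpa using this
    exact Subtype.ext (htf n v h0)
  · have hH : IsHausdorff hIdeal Ubar := by
      constructor
      intro x hx
      have hV : ∀ n : ℕ, (x : V) ≡ 0 [SMOD (hIdeal ^ n • ⊤ : Submodule Ch V)] := by
        intro n
        rw [SModEq.zero]
        obtain ⟨t, ht⟩ := (memH n x).mp (SModEq.zero.mp (hx n))
        refine (memH n (x : V)).mpr ⟨(t : V), ?_⟩
        have := congrArg (Subtype.val) ht
        simpa using this
      have : (x : V) = 0 := (IsAdicComplete.toIsHausdorff (I := hIdeal) (M := V)).haus _ hV
      exact Subtype.ext this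
    have hP : IsPrecomplete hIdeal Ubar := by
      constructor
      intro f hf
      have hfV : ∀ {m n : ℕ}, m ≤ n →
          ((f m : V)) ≡ (f n : V) [SMOD (hIdeal ^ m • ⊤ : Submodule Ch V)] := by
        intro m n hmn
        rw [SModEq.sub_mem]
        obtain ⟨t, ht⟩ := (memH m (f m - f n)).mp (SModEq.sub_mem.mp (hf hmn))
        refine (memH m _).mpr ⟨(t : V), ?_⟩
        have := congrArg (Subtype.val) ht
        simpa using this
      obtain ⟨L, hL⟩ :=
        (IsAdicComplete.toIsPrecomplete (I := hIdeal) (M := V)).prec hfV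
      -- L is in the closure of U
      have hLcl : L ∈ hClosure U := by
        intro n
        have hfn : (f n : V) ∈ hClosure U := (hmemUbar _).mp (f n).2
        obtain ⟨u, hu, hmem⟩ := hfn n
        refine ⟨u, hu, ?_⟩
        have h1 : (f n : V) - L ∈ (hIdeal ^ n • ⊤ : Submodule Ch V) :=
          SModEq.sub_mem.mp (hL n)
        have : L - u = -((f n : V) - L) + ((f n : V) - u) := by abel
        rw [this]
        exact Submodule.add_mem _ (Submodule.neg_mem _ h1) hmem
      have hLU : L ∈ Ubar := (hmemUbar L).mpr hLcl
      refine ⟨⟨L, hLU⟩, fun n => ?_⟩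
      rw [SModEq.sub_mem]
      -- f n - L in Ubar, divisible by Xⁿ in V; saturation puts the quotient in Ubar
      have h1 : (f n : V) - L ∈ (hIdeal ^ n • ⊤ : Submodule Ch V) :=
        SModEq.sub_mem.mp (hL n)
      obtain ⟨t, ht⟩ := (memH n _).mp h1
      have htU : t ∈ Ubar := by
        refine (hmemUbar t).mpr (hsat t n ?_)
        rw [← ht]
        exact (hmemUbar _).mp (Submodule.sub_mem _ (f n).2 hLU)
      refine (memH n _).mpr ⟨⟨t, htU⟩, ?_⟩
      apply Subtype.ext
      simpa using ht
    exact { toIsHausdorff := hH, toIsPrecomplete := hP }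

end
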